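/- Let U be a nonprincipal ultrafilter on ℕ and let W be an ultrafilter on ℕ × ℕ extending the product filter U × U. Then W ≤_RK U if and only if W is the diagonal ultrafilter Δ_U = {X ⊆ ℕ × ℕ | {n | (n,n) ∈ X} ∈ U}. -/

import Mathlib

/-!
If `W = F(U)` extends `U × U`, both coordinates of `F` map `U` into `U`. By Katětov's lemma any
self-map `f` admits a colouring with three colours such that `f n` and `n` get different colours
whenever `f n ≠ n`. One colour class `E` is `U`-large, and so is `f⁻¹' E` when `f` maps `U` into
`U`; on `E ∩ f⁻¹' E` the map `f` is the identity. Hence `F n = (n, n)` for `U`-almost all `n`.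
-/

open Finset in
theorem Finset.exists_card_fiber_le_one {α : Type*} [DecidableEq α] (f : α → α) {S : Finset α}
    (hS : S.Nonempty) : ∃ v ∈ S, #{m ∈ S | f m = v} ≤ 1 := by
  refine exists_le_of_sum_le hS ?_
  calc ∑ v ∈ S, #{m ∈ S | f m = v}
      = ∑ m ∈ S, ∑ v ∈ S, if f m = v then 1 else 0 := by
        simp only [card_filter]; exact sum_comm
    _ ≤ ∑ m ∈ S, 1 := sum_le_sum fun m _ => by rw [sum_ite_eq]; split_ifs <;> simp

theorem Ultrafilter.exists_eventually_eq_of_finite {α β : Type*} [Finite β] (U : Ultrafilter α)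
    (c : α → β) : ∃ i, ∀ᶠ a in U, c a = i := by
  obtain ⟨i, hi⟩ := (U.map c).eq_pure_of_finite
  exact ⟨i, show {i} ∈ U.map c by rw [hi]; exact Ultrafilter.mem_pure.2 rfl⟩

open Finset in
theorem exists_fin_three_coloring_finset {α : Type*} [DecidableEq α] (f : α → α) (S : Finset α) :
    ∃ c : α → Fin 3, ∀ n ∈ S, f n ∈ S → f n ≠ n → c (f n) ≠ c n := by
  induction S using Finset.strongInduction with
  | _ S ih =>
  rcases S.eq_empty_or_nonempty with rfl | hS
  · exact ⟨fun _ => 0, by simp⟩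
  obtain ⟨v, hvS, hv⟩ := exists_card_fiber_le_one f hS
  obtain ⟨c, hc⟩ := ih (S.erase v) (erase_ssubset hvS)
  -- `v` has at most one preimage in `S` and one image, so at most two colours are excluded.
  set T : Finset (Fin 3) := insert (c (f v)) ({m ∈ S | f m = v}.image c)
  obtain ⟨w, hwT⟩ : ∃ w, w ∉ T := by
    have : #T < #(univ : Finset (Fin 3)) := by
      have h₁ : #T ≤ _ := card_insert_le (c (f v)) ({m ∈ S | f m = v}.image c)
      have h₂ := (card_image_le (f := c) (s := {m ∈ S | f m = v})).trans hv
      simp only [card_univ, Fintype.card_fin]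
      omega
    simpa using exists_mem_notMem_of_card_lt_card this
  refine ⟨Function.update c v w, fun n hn hfn hne => ?_⟩
  by_cases hnv : n = v
  · subst hnv
    rw [Function.update_self, Function.update_of_ne hne]
    exact fun h => hwT (h ▸ mem_insert_self _ _)
  by_cases hfv : f n = v
  · rw [hfv, Function.update_self, Function.update_of_ne hnv]
    exact fun h => hwT (mem_insert_of_mem (mem_image.2 ⟨n, mem_filter.2 ⟨hn, hfv⟩, h.symm⟩))
  rw [Function.update_of_ne hnv, Function.update_of_ne hfv]
  exact hc n (mem_erase.2 ⟨hnv, hn⟩) (mem_erase.2 ⟨hfv, hfn⟩) hne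

theorem exists_fin_three_coloring {α : Type*} (f : α → α) :
    ∃ c : α → Fin 3, ∀ n, f n ≠ n → c (f n) ≠ c n := by
  classical
  choose c hc using exists_fin_three_coloring_finset f
  -- Compactness: take the colour of each point along an ultrafilter on finite subsets
  -- refining `atTop`.
  let V := Ultrafilter.of (Filter.atTop : Filter (Finset α))
  choose C hC using fun n => V.exists_eventually_eq_of_finite (c · n)
  refine ⟨C, fun n hne => ?_⟩
  have hlarge : ∀ᶠ S in (V : Filter (Finset α)), {n, f n} ⊆ S :=
    Ultrafilter.of_le _ (Filter.eventually_ge_atTop {n, f n})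
  obtain ⟨S, hS, hSn, hSf⟩ := (hlarge.and ((hC n).and (hC (f n)))).exists
  rw [← hSn, ← hSf]
  exact hc S n (hS (by simp)) (hS (by simp)) hne

theorem Ultrafilter.eventuallyEq_id_of_tendsto {α : Type*} {U : Ultrafilter α} {f : α → α}
    (hf : Filter.Tendsto f U U) : f =ᶠ[U] id := by
  obtain ⟨c, hc⟩ := exists_fin_three_coloring f
  obtain ⟨i, hi⟩ := U.exists_eventually_eq_of_finite c
  filter_upwards [hi, hf.eventually hi] with n hn hfn
  by_contra hne
  exact hc n hne (hfn.trans hn.symm)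

theorem stmt_9_general (U : Ultrafilter ℕ)
    (W : Ultrafilter (ℕ × ℕ)) (hW : ∀ A ∈ U, ∀ B ∈ U, A ×ˢ B ∈ W) :
    (∃ F : ℕ → ℕ × ℕ, Ultrafilter.map F U = W) ↔
      W = Ultrafilter.map (fun n => (n, n)) U := by
  refine ⟨?_, fun h => ⟨_, h.symm⟩⟩
  rintro ⟨F, rfl⟩
  have hWU : Filter.map F U ≤ (U : Filter ℕ) ×ˢ U := fun s hs => by
    obtain ⟨A, hA, B, hB, hAB⟩ := Filter.mem_prod_iff.1 hs
    exact Filter.mem_of_superset (hW A hA B hB) hAB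
  have hF := Filter.le_prod.1 (Filter.tendsto_map.mono_right hWU)
  refine Ultrafilter.coe_injective (Filter.map_congr ?_)
  filter_upwards [Ultrafilter.eventuallyEq_id_of_tendsto hF.1,
    Ultrafilter.eventuallyEq_id_of_tendsto hF.2] with n h₁ h₂
  exact Prod.ext h₁ h₂

theorem stmt_9 (U : Ultrafilter ℕ) (hU : ∀ n, U ≠ pure n)
    (W : Ultrafilter (ℕ × ℕ)) (hW : ∀ A ∈ U, ∀ B ∈ U, A ×ˢ B ∈ W) :
    (∃ F : ℕ → ℕ × ℕ, Ultrafilter.map F U = W) ↔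
      W = Ultrafilter.map (fun n => (n, n)) U :=
  stmt_9_general U W hW
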